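/- Let F and F̂ be as in the SAA setting with η* and η̂* their respective minimizers over [0, 2/(ρ(1−γ))]. Then for any λ > 0, P(|F̂(η̂*) − F(η*)| ≥ λ) ≤ (2/λ)·((8−4ρ)/((1−γ)ρ))·exp(−C λ² ρ² (1−γ)² / 8). -/

import Mathlib

/-!
Up to the cancelling linear terms, `F̂ − F` is the deviation of an empirical mean of `(η − V)₊`
from its expectation. Both means are nondecreasing in `η` with slope at most one, so the deviation
is `1`-Lipschitz in `η`, and on `[0, L]`, `L = 2/(ρ(1−γ))`, it is bounded by `L`. Since
`|min F̂ − min F| ≤ sup |F̂ − F|` over `[0, L]`, the event forces a deviation `≥ λ` somewhere, hence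
`≥ λ/2` at one of the `⌈L/λ⌉` midpoints of a grid of mesh `≤ λ`. Hoeffding's inequality at each
midpoint and a union bound give `⌈L/λ⌉ · 2 exp(−Cλ²/(2L²))`; for `λ > L` the event is empty.
-/

open MeasureTheory Set ProbabilityTheory Real Finset
open scoped NNReal

section Hoeffding

variable {Ω : Type*} [MeasurableSpace Ω] {μ : Measure Ω}

lemma ProbabilityTheory.HasSubgaussianMGF.measureReal_abs_ge_le [IsFiniteMeasure μ] {X : Ω → ℝ}
    {c : ℝ≥0} (h : HasSubgaussianMGF X c μ) {ε : ℝ} (hε : 0 ≤ ε) :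
    μ.real {ω | ε ≤ |X ω|} ≤ 2 * exp (-ε ^ 2 / (2 * c)) := by
  have hsplit : {ω | ε ≤ |X ω|} ⊆ {ω | ε ≤ X ω} ∪ {ω | ε ≤ (-X) ω} := fun _ hω => by
    simpa only [mem_union, mem_ofPred_eq, Pi.neg_apply, le_abs] using hω
  calc μ.real {ω | ε ≤ |X ω|} ≤ μ.real {ω | ε ≤ X ω} + μ.real {ω | ε ≤ (-X) ω} :=
        (measureReal_mono hsplit).trans (measureReal_union_le _ _)
    _ ≤ 2 * exp (-ε ^ 2 / (2 * c)) := by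
        linarith [h.measure_ge_le hε, h.neg.measure_ge_le hε]

lemma measureReal_abs_mean_sub_ge_le [IsProbabilityMeasure μ] {n : ℕ} {Y : Fin n → Ω → ℝ}
    (hmeas : ∀ i, Measurable (Y i)) (hindep : iIndepFun Y μ) {a b : ℝ}
    (hbd : ∀ i ω, Y i ω ∈ Icc a b) {m : ℝ} (hm : ∀ i, μ[Y i] = m) {ε : ℝ} (hε : 0 ≤ ε) :
    μ.real {ω | ε ≤ |1 / (n : ℝ) * ∑ i, Y i ω - m|} ≤ 2 * exp (-2 * n * ε ^ 2 / (b - a) ^ 2) := by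
  rcases n.eq_zero_or_pos with rfl | hn
  · simp only [CharP.cast_eq_zero, mul_zero, zero_mul, zero_div, exp_zero]
    linarith [measureReal_le_one (μ := μ) (s := {ω | ε ≤ |1 / ((0 : ℕ) : ℝ) * ∑ i, Y i ω - m|})]
  have hn' : (0 : ℝ) < n := by exact_mod_cast hn
  have hsubG : HasSubgaussianMGF (fun ω => ∑ i, (Y i ω - m)) (∑ _i : Fin n, (‖b - a‖₊ / 2) ^ 2) μ :=
    HasSubgaussianMGF.sum_of_iIndepFun (hindep.comp (fun _ x => x - m) fun _ => by fun_prop)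
      fun i _ => by
        simpa [Function.comp_def, hm i] using
          hasSubgaussianMGF_of_mem_Icc (μ := μ) (hmeas i).aemeasurable (ae_of_all _ (hbd i))
  have hevent : {ω | ε ≤ |1 / (n : ℝ) * ∑ i, Y i ω - m|} = {ω | n * ε ≤ |∑ i, (Y i ω - m)|} := by
    ext ω
    have : ∑ i, (Y i ω - m) = n * (1 / (n : ℝ) * ∑ i, Y i ω - m) := by
      rw [sum_sub_distrib]; field_simp; simp
    rw [mem_ofPred_eq, mem_ofPred_eq, this, abs_mul, abs_of_pos hn', mul_le_mul_iff_right₀ hn']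
  rw [hevent]
  refine (hsubG.measureReal_abs_ge_le (by positivity)).trans_eq ?_
  congr 2
  push_cast
  rw [sum_const, card_univ, Fintype.card_fin, nsmul_eq_mul, div_pow, Real.norm_eq_abs, sq_abs,
    show -(n * ε) ^ 2 = n * (-ε ^ 2 * n) by ring,
    show 2 * (n * ((b - a) ^ 2 / 2 ^ 2)) = n * ((b - a) ^ 2 / 2) by ring,
    mul_div_mul_left _ _ hn'.ne', div_div_eq_mul_div]
  ring

end Hoeffding

lemma max_sub_zero_mem_Icc {η v L : ℝ} (hv : 0 ≤ v) (hη : η ≤ L) (hL : 0 ≤ L) :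
    max (η - v) 0 ∈ Icc 0 L :=
  ⟨le_max_right _ _, max_le (by linarith) hL⟩

lemma max_sub_zero_sub_mem_Icc {x y : ℝ} (hxy : x ≤ y) (v : ℝ) :
    max (y - v) 0 - max (x - v) 0 ∈ Icc 0 (y - x) := by
  constructor <;> simp only [max_def] <;> split_ifs <;> linarith

lemma one_div_mul_sum_mem_Icc {n : ℕ} {a : Fin n → ℝ} {δ : ℝ} (hδ : 0 ≤ δ)
    (ha : ∀ i, a i ∈ Icc 0 δ) : 1 / (n : ℝ) * ∑ i, a i ∈ Icc 0 δ := by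
  refine ⟨mul_nonneg (by positivity) (sum_nonneg fun i _ => (ha i).1), ?_⟩
  rcases n.eq_zero_or_pos with rfl | hn
  · simpa using hδ
  calc 1 / (n : ℝ) * ∑ i, a i ≤ 1 / (n : ℝ) * (n * δ) := by
        gcongr
        simpa using sum_le_card_nsmul univ a δ fun i _ => (ha i).2
    _ = δ := by field_simp

lemma integral_mem_Icc {S : Type*} [MeasurableSpace S] {P : Measure S} [IsProbabilityMeasure P]
    {φ : S → ℝ} {δ : ℝ} (hφ : ∀ s, φ s ∈ Icc 0 δ) : ∫ s, φ s ∂P ∈ Icc 0 δ :=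
  ⟨integral_nonneg fun s => (hφ s).1,
    (integral_mono_of_nonneg (ae_of_all _ fun s => (hφ s).1) (integrable_const δ)
      (ae_of_all _ fun s => (hφ s).2)).trans_eq (by simp)⟩

lemma abs_sub_le_max_of_isMinOn {α : Type*} {f g : α → ℝ} {s : Set α} {a b : α}
    (hf : IsMinOn f s a) (hg : IsMinOn g s b) (ha : a ∈ s) (hb : b ∈ s) :
    |f a - g b| ≤ max |f b - g b| |f a - g a| := by
  have hfab := isMinOn_iff.1 hf b hb
  have hgba := isMinOn_iff.1 hg a ha
  rw [abs_le]
  constructor <;> linarith [le_abs_self (f b - g b), neg_abs_le (f a - g a),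
    le_max_left |f b - g b| |f a - g a|, le_max_right |f b - g b| |f a - g a|]

lemma exists_lt_abs_sub_add_half_le {d : ℕ} (hd : 0 < d) {t : ℝ} (ht : t ∈ Icc 0 (d : ℝ)) :
    ∃ j < d, |t - (j + 1 / 2)| ≤ 1 / 2 := by
  rcases ht.2.lt_or_eq with htd | rfl
  · refine ⟨⌊t⌋₊, Nat.floor_lt ht.1 |>.2 htd, abs_le.2 ⟨?_, ?_⟩⟩
    · linarith [Nat.floor_le ht.1]
    · linarith [Nat.lt_floor_add_one t]
  · refine ⟨d - 1, Nat.sub_lt hd one_pos, ?_⟩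
    rw [Nat.cast_pred hd, show (d : ℝ) - (d - 1 + 1 / 2) = 1 / 2 by ring, abs_of_pos one_half_pos]

/-- Union bound over the midpoints of `⌈L / λ⌉` cells of width at most `λ` covering `[0, L]`. -/
lemma measureReal_exists_abs_ge_le {Ω : Type*} [MeasurableSpace Ω] {μ : Measure Ω}
    [IsFiniteMeasure μ] {D : Ω → ℝ → ℝ} (hD : ∀ ω x y, |D ω x - D ω y| ≤ |x - y|)
    {L lam B : ℝ} (hL : 0 < L) (hlam : 0 < lam)
    (htail : ∀ η ∈ Icc 0 L, μ.real {ω | lam / 2 ≤ |D ω η|} ≤ B) :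
    μ.real {ω | ∃ η ∈ Icc 0 L, lam ≤ |D ω η|} ≤ ⌈L / lam⌉₊ * B := by
  set d := ⌈L / lam⌉₊
  have hd : 0 < (d : ℝ) := Nat.cast_pos.2 (Nat.ceil_pos.2 (div_pos hL hlam))
  have hwidth : L / d ≤ lam := (div_le_iff₀ hd).2 ((div_le_iff₀' hlam).1 (Nat.le_ceil _))
  set c : ℕ → ℝ := fun j => (j + 1 / 2) * (L / d)
  have hc : ∀ j < d, c j ∈ Icc 0 L := fun j hj => by
    have : (j : ℝ) + 1 / 2 ≤ d := by
      have : (j : ℝ) + 1 ≤ d := by exact_mod_cast hj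
      linarith
    refine ⟨by positivity, ?_⟩
    calc c j ≤ d * (L / d) := mul_le_mul_of_nonneg_right this (by positivity)
      _ = L := mul_div_cancel₀ L hd.ne'
  have hcover : {ω | ∃ η ∈ Icc 0 L, lam ≤ |D ω η|} ⊆
      ⋃ j ∈ range d, {ω | lam / 2 ≤ |D ω (c j)|} := by
    rintro ω ⟨η, hη, hlarge⟩
    have ht : η * d / L ∈ Icc 0 (d : ℝ) :=
      ⟨by have := hη.1; positivity, (div_le_iff₀ hL).2 (by nlinarith [hη.2])⟩
    obtain ⟨j, hj, hjη⟩ := exists_lt_abs_sub_add_half_le (Nat.cast_pos.1 hd) ht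
    have hclose : |η - c j| ≤ lam / 2 :=
      calc |η - c j| = |L / d * (η * d / L - (j + 1 / 2))| := by
            congr 1
            simp only [c]
            field_simp
        _ = L / d * |η * d / L - (j + 1 / 2)| := by rw [abs_mul, abs_of_pos (div_pos hL hd)]
        _ ≤ lam * (1 / 2) := by gcongr
        _ = lam / 2 := by ring
    refine mem_biUnion (mem_range.2 hj) (show lam / 2 ≤ |D ω (c j)| by
      linarith [hD ω η (c j), abs_sub_abs_le_abs_sub (D ω η) (D ω (c j))])
  calc μ.real {ω | ∃ η ∈ Icc 0 L, lam ≤ |D ω η|}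
      ≤ ∑ j ∈ range d, μ.real {ω | lam / 2 ≤ |D ω (c j)|} :=
        (measureReal_mono hcover (measure_ne_top μ _)).trans (measureReal_biUnion_finset_le _ _)
    _ ≤ ∑ _j ∈ range d, B := sum_le_sum fun j hj => htail _ (hc j (mem_range.1 hj))
    _ = d * B := by simp

section SampleAverageApproximation

variable {S : Type*} [MeasurableSpace S] (P : Measure S) (V : S → ℝ)

/-- `F̂ − F` for the sample `x`; the linear terms `η (1 − ρ)` cancel. -/
noncomputable def saaError {n : ℕ} (x : Fin n → S) (η : ℝ) : ℝ :=
  1 / (n : ℝ) * ∑ i, max (η - V (x i)) 0 - ∫ s, max (η - V s) 0 ∂P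

variable {P V}

lemma abs_saaError_le [IsProbabilityMeasure P] (hV0 : ∀ s, 0 ≤ V s) {n : ℕ} (x : Fin n → S)
    {η L : ℝ} (hη : η ∈ Icc 0 L) :
    |saaError P V x η| ≤ L := by
  have hL : 0 ≤ L := hη.1.trans hη.2
  have hemp := one_div_mul_sum_mem_Icc hL fun i => max_sub_zero_mem_Icc (hV0 (x i)) hη.2 hL
  have hint := integral_mem_Icc (P := P) fun s => max_sub_zero_mem_Icc (hV0 s) hη.2 hL
  exact abs_sub_le_of_nonneg_of_le hemp.1 hemp.2 hint.1 hint.2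

lemma integrable_max_sub_zero [IsFiniteMeasure P] (hV0 : ∀ s, 0 ≤ V s) (hV : Measurable V)
    (η : ℝ) : Integrable (fun s => max (η - V s) 0) P :=
  Integrable.of_mem_Icc 0 |η| (by fun_prop)
    (ae_of_all _ fun s => max_sub_zero_mem_Icc (hV0 s) (le_abs_self η) (abs_nonneg η))

/-- Both the empirical and the true mean of `(η − V)₊` are nondecreasing in `η` with slope at
most `1`, so their difference is `1`-Lipschitz. -/
lemma abs_saaError_sub_le [IsProbabilityMeasure P] (hV0 : ∀ s, 0 ≤ V s) (hV : Measurable V)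
    {n : ℕ} (x : Fin n → S) (η₁ η₂ : ℝ) :
    |saaError P V x η₁ - saaError P V x η₂| ≤ |η₁ - η₂| := by
  wlog h : η₂ ≤ η₁ generalizing η₁ η₂
  · rw [abs_sub_comm, abs_sub_comm η₁]
    exact this η₂ η₁ (le_of_not_ge h)
  have hemp : 1 / (n : ℝ) * ∑ i, max (η₁ - V (x i)) 0 - 1 / (n : ℝ) * ∑ i, max (η₂ - V (x i)) 0
      ∈ Icc 0 (η₁ - η₂) := by
    rw [← mul_sub, ← sum_sub_distrib]
    exact one_div_mul_sum_mem_Icc (sub_nonneg.2 h) fun i => max_sub_zero_sub_mem_Icc h _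
  have hint : ∫ s, max (η₁ - V s) 0 ∂P - ∫ s, max (η₂ - V s) 0 ∂P ∈ Icc 0 (η₁ - η₂) := by
    rw [← integral_sub (integrable_max_sub_zero hV0 hV η₁) (integrable_max_sub_zero hV0 hV η₂)]
    exact integral_mem_Icc fun s => max_sub_zero_sub_mem_Icc h _
  rw [abs_of_nonneg (sub_nonneg.2 h), saaError, saaError,
    show ∀ a b c d : ℝ, a - b - (c - d) = (a - c) - (b - d) by intros; ring]
  exact abs_sub_le_of_nonneg_of_le hemp.1 hemp.2 hint.1 hint.2

lemma measureReal_abs_saaError_ge_le (hV0 : ∀ s, 0 ≤ V s) (hV : Measurable V) {Ω : Type*}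
    [MeasurableSpace Ω] {μ : Measure Ω} [IsProbabilityMeasure μ] {n : ℕ} {X : Fin n → Ω → S}
    (hX : ∀ i, Measurable (X i)) (hindep : iIndepFun X μ) (hlaw : ∀ i, μ.map (X i) = P)
    {η L ε : ℝ} (hη : η ∈ Icc 0 L) (hε : 0 ≤ ε) :
    μ.real {ω | ε ≤ |saaError P V (fun i => X i ω) η|} ≤ 2 * exp (-2 * n * ε ^ 2 / L ^ 2) := by
  have hmeas : Measurable fun s => max (η - V s) 0 := by fun_prop
  have hmean : ∀ i, ∫ ω, max (η - V (X i ω)) 0 ∂μ = ∫ s, max (η - V s) 0 ∂P := fun i => by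
    rw [← hlaw i, integral_map (hX i).aemeasurable hmeas.aestronglyMeasurable]
  have hoeffding := measureReal_abs_mean_sub_ge_le (Y := fun i ω => max (η - V (X i ω)) 0)
    (fun i => hmeas.comp (hX i)) (hindep.comp (fun _ s => max (η - V s) 0) fun _ => hmeas)
    (fun i ω => max_sub_zero_mem_Icc (hV0 (X i ω)) hη.2 (hη.1.trans hη.2)) hmean hε
  rwa [sub_zero] at hoeffding

lemma measureReal_exists_abs_saaError_ge_le [IsProbabilityMeasure P] (hV0 : ∀ s, 0 ≤ V s)
    (hV : Measurable V) {Ω : Type*} [MeasurableSpace Ω] {μ : Measure Ω} [IsProbabilityMeasure μ]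
    {n : ℕ} {X : Fin n → Ω → S} (hX : ∀ i, Measurable (X i)) (hindep : iIndepFun X μ)
    (hlaw : ∀ i, μ.map (X i) = P) {L lam : ℝ} (hL : 0 < L) (hlam : 0 < lam) :
    μ.real {ω | ∃ η ∈ Icc 0 L, lam ≤ |saaError P V (fun i => X i ω) η|} ≤
      ⌈L / lam⌉₊ * (2 * exp (-2 * n * (lam / 2) ^ 2 / L ^ 2)) :=
  measureReal_exists_abs_ge_le (fun ω => abs_saaError_sub_le hV0 hV _) hL hlam fun _ hη =>
    measureReal_abs_saaError_ge_le hV0 hV hX hindep hlaw hη (by positivity)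

end SampleAverageApproximation

lemma ceil_div_mul_two_mul_exp_le {γ ρ lam : ℝ} (n : ℕ) (hγ1 : γ < 1) (hρ0 : 0 < ρ) (hρ1 : ρ ≤ 1)
    (hlam : 0 < lam) (hlamL : lam ≤ 2 / (ρ * (1 - γ))) :
    ⌈2 / (ρ * (1 - γ)) / lam⌉₊ * (2 * exp (-2 * n * (lam / 2) ^ 2 / (2 / (ρ * (1 - γ))) ^ 2)) ≤
      2 / lam * ((8 - 4 * ρ) / ((1 - γ) * ρ)) * exp (-(n * lam ^ 2 * ρ ^ 2 * (1 - γ) ^ 2) / 8) := by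
  have h1γ : 0 < 1 - γ := by linarith
  have hceil := Nat.ceil_le_two_mul (a := 2 / (ρ * (1 - γ)) / lam)
    (by rw [le_div_iff₀ hlam]; linarith)
  have hcount : (⌈2 / (ρ * (1 - γ)) / lam⌉₊ : ℝ) * 2 ≤ 2 / lam * ((8 - 4 * ρ) / ((1 - γ) * ρ)) :=
    calc (⌈2 / (ρ * (1 - γ)) / lam⌉₊ : ℝ) * 2 ≤ 2 * (2 / (ρ * (1 - γ)) / lam) * 2 := by gcongr
      _ = 2 / lam * (4 / ((1 - γ) * ρ)) := by field_simp; ring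
      _ ≤ 2 / lam * ((8 - 4 * ρ) / ((1 - γ) * ρ)) := by gcongr; linarith
  have hexponent : -2 * n * (lam / 2) ^ 2 / (2 / (ρ * (1 - γ))) ^ 2 =
      -(n * lam ^ 2 * ρ ^ 2 * (1 - γ) ^ 2) / 8 := by
    field_simp
    ring
  rw [hexponent, ← mul_assoc]
  gcongr


theorem rss_saa_two_sided_general {S Ω : Type*} [MeasurableSpace S] [MeasurableSpace Ω]
    (μ : Measure Ω) [IsProbabilityMeasure μ]
    (P : Measure S) [IsProbabilityMeasure P]
    (γ ρ : ℝ) (hγ1 : γ < 1) (hρ0 : 0 < ρ) (hρ1 : ρ ≤ 1)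
    (C : ℕ)
    (V : S → ℝ) (hVmeas : Measurable V) (hV : ∀ s, V s ∈ Set.Icc 0 (1 / (1 - γ)))
    (X : Fin C → Ω → S) (hXmeas : ∀ i, Measurable (X i))
    (hindep : ProbabilityTheory.iIndepFun X μ)
    (hlaw : ∀ i, Measure.map (X i) μ = P)
    (F : ℝ → ℝ)
    (hF : ∀ η, F η = (∫ s', max (η - V s') 0 ∂P) - η * (1 - ρ))
    (Fhat : Ω → ℝ → ℝ)
    (hFhat : ∀ ω η, Fhat ω η = (1 / (C : ℝ)) * ∑ i, max (η - V (X i ω)) 0 - η * (1 - ρ))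
    (ηstar : ℝ) (hηstar : ηstar ∈ Set.Icc (0:ℝ) (2 / (ρ * (1 - γ))))
    (hηstarmin : ∀ η ∈ Set.Icc (0:ℝ) (2 / (ρ * (1 - γ))), F ηstar ≤ F η)
    (ηhat : Ω → ℝ)
    (hηhat : ∀ ω, ηhat ω ∈ Set.Icc (0:ℝ) (2 / (ρ * (1 - γ))) ∧
      ∀ η ∈ Set.Icc (0:ℝ) (2 / (ρ * (1 - γ))), Fhat ω (ηhat ω) ≤ Fhat ω η)
    (lam : ℝ) (hlam : 0 < lam) :
    μ {ω | |Fhat ω (ηhat ω) - F ηstar| ≥ lam} ≤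
      ENNReal.ofReal ((2 / lam) * ((8 - 4 * ρ) / ((1 - γ) * ρ)) *
        Real.exp (-(C * lam ^ 2 * ρ ^ 2 * (1 - γ) ^ 2) / 8)) := by
  have hL : 0 < 2 / (ρ * (1 - γ)) := div_pos two_pos (mul_pos hρ0 (sub_pos.2 hγ1))
  have hV0 : ∀ s, 0 ≤ V s := fun s => (hV s).1
  have herror : ∀ ω η, Fhat ω η - F η = saaError P V (fun i => X i ω) η := fun ω η => by
    rw [hFhat, hF, saaError]
    ring
  have hevent : {ω | |Fhat ω (ηhat ω) - F ηstar| ≥ lam} ⊆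
      {ω | ∃ η ∈ Icc 0 (2 / (ρ * (1 - γ))), lam ≤ |saaError P V (fun i => X i ω) η|} :=
    fun ω hω => by
      rcases le_max_iff.1 (le_trans hω (abs_sub_le_max_of_isMinOn (isMinOn_iff.2 (hηhat ω).2)
        (isMinOn_iff.2 hηstarmin) (hηhat ω).1 hηstar)) with h | h
      · exact ⟨ηstar, hηstar, herror ω ηstar ▸ h⟩
      · exact ⟨ηhat ω, (hηhat ω).1, herror ω (ηhat ω) ▸ h⟩
  rw [← ofReal_measureReal]
  refine ENNReal.ofReal_le_ofReal ((measureReal_mono hevent).trans ?_)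
  rcases le_or_gt lam (2 / (ρ * (1 - γ))) with hlamL | hLlam
  · exact (measureReal_exists_abs_saaError_ge_le hV0 hVmeas hXmeas hindep hlaw hL hlam).trans
      (ceil_div_mul_two_mul_exp_le C hγ1 hρ0 hρ1 hlam hlamL)
  · have hempty : {ω | ∃ η ∈ Icc 0 (2 / (ρ * (1 - γ))),
        lam ≤ |saaError P V (fun i => X i ω) η|} = ∅ :=
      eq_empty_iff_forall_notMem.2 fun ω ⟨η, hη, h⟩ =>
        (h.trans (abs_saaError_le hV0 _ hη)).not_gt hLlam
    rw [hempty, measureReal_empty]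
    have : 0 ≤ 8 - 4 * ρ := by linarith
    have : 0 < 1 - γ := by linarith
    positivity

/-- two-sided SAA concentration.  With `F`, `F̂`, minimizers `η*`, `η̂*`
over `[0, 2/(ρ(1−γ))]`, for any `λ > 0`,
`P(|F̂(η̂*) − F(η*)| ≥ λ) ≤ (2/λ)·((8−4ρ)/((1−γ)ρ))·exp(−Cλ²ρ²(1−γ)²/8)`. -/
theorem rss_saa_two_sided {S Ω : Type*} [MeasurableSpace S] [MeasurableSpace Ω]
    (μ : Measure Ω) [IsProbabilityMeasure μ]
    (P : Measure S) [IsProbabilityMeasure P]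
    (γ ρ : ℝ) (hγ0 : 0 ≤ γ) (hγ1 : γ < 1) (hρ0 : 0 < ρ) (hρ1 : ρ ≤ 1)
    (C : ℕ) (hC : 0 < C)
    (V : S → ℝ) (hVmeas : Measurable V) (hV : ∀ s, V s ∈ Set.Icc 0 (1 / (1 - γ)))
    (X : Fin C → Ω → S) (hXmeas : ∀ i, Measurable (X i))
    (hindep : ProbabilityTheory.iIndepFun X μ)
    (hlaw : ∀ i, Measure.map (X i) μ = P)
    (F : ℝ → ℝ)
    (hF : ∀ η, F η = (∫ s', max (η - V s') 0 ∂P) - η * (1 - ρ))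
    (Fhat : Ω → ℝ → ℝ)
    (hFhat : ∀ ω η, Fhat ω η = (1 / (C : ℝ)) * ∑ i, max (η - V (X i ω)) 0 - η * (1 - ρ))
    (ηstar : ℝ) (hηstar : ηstar ∈ Set.Icc (0:ℝ) (2 / (ρ * (1 - γ))))
    (hηstarmin : ∀ η ∈ Set.Icc (0:ℝ) (2 / (ρ * (1 - γ))), F ηstar ≤ F η)
    (ηhat : Ω → ℝ)
    (hηhat : ∀ ω, ηhat ω ∈ Set.Icc (0:ℝ) (2 / (ρ * (1 - γ))) ∧
      ∀ η ∈ Set.Icc (0:ℝ) (2 / (ρ * (1 - γ))), Fhat ω (ηhat ω) ≤ Fhat ω η)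
    (lam : ℝ) (hlam : 0 < lam) :
    μ {ω | |Fhat ω (ηhat ω) - F ηstar| ≥ lam} ≤
      ENNReal.ofReal ((2 / lam) * ((8 - 4 * ρ) / ((1 - γ) * ρ)) *
        Real.exp (-(C * lam ^ 2 * ρ ^ 2 * (1 - γ) ^ 2) / 8)) :=
  rss_saa_two_sided_general μ P γ ρ hγ1 hρ0 hρ1 C V hVmeas hV X hXmeas hindep hlaw F hF Fhat hFhat
    ηstar hηstar hηstarmin ηhat hηhat lam hlam
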